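/- Let R be a ring with proper involution, m a positive integer, let x be an m-weak group inverse of a ∈ R and let y be an m-weak group inverse of b ∈ R. If a b = b a and a^* b = b a^*, then a b has an m-weak group inverse, x y = y x, and x y is an m-weak group inverse of a b. -/

import Mathlib

/-- `z` is an `m`-weak group inverse of `a`. -/
def IsMWGI {R : Type*} [Ring R] [StarRing R] (m : ℕ) (a z : R) : Prop :=
  a * z ^ 2 = z ∧ ∃ k : ℕ, z * a ^ (k + 1) = a ^ k ∧
    star (a ^ k) * a ^ (m + 1) * z = star (a ^ k) * a ^ m

/-- `w` is a weak group inverse of `b`. -/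
def IsWGI {R : Type*} [Ring R] [StarRing R] (b w : R) : Prop :=
  b * w ^ 2 = w ∧ star (star b * b ^ 2 * w) = star b * b ^ 2 * w ∧
    ∃ k : ℕ, b ^ k = w * b ^ (k + 1)

/-- `x` is a group inverse of `u`. -/
def IsGroupInv {R : Type*} [Ring R] (u x : R) : Prop :=
  u * x ^ 2 = x ∧ u * x = x * u ∧ u = u ^ 2 * x

/-- `d` is a Drazin inverse of `a`. -/
def IsDrazin {R : Type*} [Ring R] (a d : R) : Prop :=
  a * d ^ 2 = d ∧ a * d = d * a ∧ ∃ k : ℕ, a ^ k = d * a ^ (k + 1)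

/-- `y` is a core-EP inverse of `a`. -/
def IsCoreEP {R : Type*} [Ring R] [StarRing R] (a y : R) : Prop :=
  a * y ^ 2 = y ∧ star (a * y) = a * y ∧ ∃ k : ℕ, a ^ k = y * a ^ (k + 1)

/-!
If `c` commutes with `a` and `star a`, it commutes with every `m`-weak group inverse `x` of `a`:
`d = x ^ (k + 2) * a ^ (k + 1)` is a Drazin inverse of `a`, hence lies in the double commutant
of `a`, so `c` commutes with the idempotent `a * d`, which fixes `x`. Then `u = c * x - x * c`
satisfies `star (a ^ k) * (a ^ (m + 1) * u) = 0` with `a ^ (m + 1) * u ∈ a ^ k * R`, so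
properness gives `a ^ (m + 1) * u = 0`, and `u = d ^ (m + 1) * a ^ (m + 1) * u = 0`.
Taking `c = b, star b` for `x`, then `c = a, x` for `y`, yields all the commutations needed to
multiply the defining identities of `x` and `y`.
-/

open Filter

section Ring

variable {R : Type*} [Ring R] {a x : R}

theorem pow_mul_pow_succ_of_mul_sq (h : a * x ^ 2 = x) (j : ℕ) : a ^ j * x ^ (j + 1) = x := by
  induction j with
  | zero => simp
  | succ j ih =>
    calc a ^ (j + 1) * x ^ (j + 1 + 1) = a ^ j * (a * x ^ 2) * x ^ j := by
          rw [pow_succ a, show j + 1 + 1 = 2 + j by omega, pow_add]; simp only [mul_assoc]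
      _ = x := by rw [h, mul_assoc, ← pow_succ', ih]

theorem mul_pow_add_two_of_mul_sq (h : a * x ^ 2 = x) (j : ℕ) : a * x ^ (j + 2) = x ^ (j + 1) := by
  rw [add_comm j, pow_add, ← mul_assoc, h, ← pow_succ']

theorem mul_pow_add_succ_of_mul_pow_succ {k : ℕ} (h : x * a ^ (k + 1) = a ^ k) (i : ℕ) :
    x * a ^ (k + i + 1) = a ^ (k + i) := by
  rw [add_right_comm, pow_add, ← mul_assoc, h, pow_add]

theorem pow_mul_pow_add_of_mul_pow_succ {k : ℕ} (h : x * a ^ (k + 1) = a ^ k) (i : ℕ) :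
    x ^ i * a ^ (k + i) = a ^ k := by
  induction i with
  | zero => simp
  | succ i ih =>
    rw [pow_succ, mul_assoc, ← add_assoc, mul_pow_add_succ_of_mul_pow_succ h, ih]

theorem isDrazin_pow_mul_pow {k : ℕ} (h : a * x ^ 2 = x) (hk : x * a ^ (k + 1) = a ^ k) :
    IsDrazin a (x ^ (k + 2) * a ^ (k + 1)) := by
  refine ⟨?_, ?_, k, ?_⟩
  · calc a * (x ^ (k + 2) * a ^ (k + 1)) ^ 2
        = a * x ^ (k + 2) * (a ^ (k + 1) * x ^ (k + 1 + 1)) * a ^ (k + 1) := by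
          simp only [sq, mul_assoc]
      _ = a * x ^ (k + 3) * a ^ (k + 1) := by
          rw [pow_mul_pow_succ_of_mul_sq h, pow_succ x (k + 2)]; simp only [mul_assoc]
      _ = x ^ (k + 2) * a ^ (k + 1) := by rw [mul_pow_add_two_of_mul_sq h]
  · rw [← mul_assoc, mul_pow_add_two_of_mul_sq h, mul_assoc, ← pow_succ, pow_succ x (k + 1),
      mul_assoc, mul_pow_add_succ_of_mul_pow_succ hk 1]
  · rw [mul_assoc, ← pow_add, show k + 1 + (k + 1) = k + (k + 2) by omega,
      pow_mul_pow_add_of_mul_pow_succ hk]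

namespace IsDrazin

variable {d : R}

theorem pow_mul_pow_succ (hd : IsDrazin a d) (j : ℕ) : a ^ j * d ^ (j + 1) = d :=
  pow_mul_pow_succ_of_mul_sq hd.1 j

theorem pow_succ_mul_pow (hd : IsDrazin a d) (j : ℕ) : d ^ (j + 1) * a ^ j = d := by
  rw [← (Commute.pow_pow hd.2.1 j (j + 1)).eq, hd.pow_mul_pow_succ]

theorem exists_mul_mul_pow (hd : IsDrazin a d) : ∃ i, a * d * a ^ i = a ^ i := by
  obtain ⟨k, hk⟩ := hd.2.2
  exact ⟨k + 1, by rw [mul_assoc, ← hk, pow_succ']⟩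

theorem commute_of_commute (hd : IsDrazin a d) {c : R} (hc : Commute c a) : Commute c d := by
  obtain ⟨k, hk⟩ := hd.2.2
  have had : Commute a d := hd.2.1
  have hk' : a ^ k = a ^ (k + 1) * d := by rw [hk, (had.pow_left (k + 1)).eq]
  have hdc : d * c = d * a * c * d :=
    calc d * c = d ^ (k + 1) * a ^ k * c := by rw [hd.pow_succ_mul_pow]
      _ = d ^ (k + 1) * (c * (a ^ (k + 1) * d)) := by
          rw [mul_assoc, ← (hc.pow_right k).eq, hk']
      _ = d ^ (k + 1) * a ^ (k + 1) * c * d := by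
          rw [← mul_assoc c, (hc.pow_right (k + 1)).eq]; simp only [mul_assoc]
      _ = d * a * c * d := by rw [pow_succ a k, ← mul_assoc, hd.pow_succ_mul_pow]
  have hcd : c * d = d * c * a * d :=
    calc c * d = c * (a ^ k * d ^ (k + 1)) := by rw [hd.pow_mul_pow_succ]
      _ = d * a ^ (k + 1) * c * d ^ (k + 1) := by
          rw [← mul_assoc, (hc.pow_right k).eq, hk]
      _ = d * c * (a * (a ^ k * d ^ (k + 1))) := by
          rw [mul_assoc d, ← (hc.pow_right (k + 1)).eq, pow_succ' a k]; simp only [mul_assoc]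
      _ = d * c * a * d := by rw [hd.pow_mul_pow_succ, ← mul_assoc]
  show c * d = d * c
  rw [hcd, mul_assoc d c a, hc.eq, ← mul_assoc, ← hdc]

end IsDrazin

end Ring

section StarRing

variable {R : Type*} [Ring R] [StarRing R]

theorem mul_eq_zero_of_star_mul_mul_eq_zero (hproper : ∀ z : R, star z * z = 0 → z = 0)
    {p t : R} (h : star p * (p * t) = 0) : p * t = 0 :=
  hproper _ (by rw [star_mul, mul_assoc, h, mul_zero])

namespace IsMWGI

variable {m : ℕ} {a x : R}

theorem eventually_index (hx : IsMWGI m a x) :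
    ∀ᶠ j in atTop, x * a ^ (j + 1) = a ^ j ∧
      star (a ^ j) * a ^ m * (a * x) = star (a ^ j) * a ^ m := by
  obtain ⟨-, k, hk, hstar⟩ := hx
  refine eventually_atTop.2 ⟨k, fun j hj => ?_⟩
  obtain ⟨i, rfl⟩ := Nat.exists_eq_add_of_le hj
  refine ⟨mul_pow_add_succ_of_mul_pow_succ hk i, ?_⟩
  calc star (a ^ (k + i)) * a ^ m * (a * x) = star (a ^ i) * (star (a ^ k) * a ^ (m + 1) * x) := by
        rw [pow_add, star_mul, pow_succ a m]; simp only [mul_assoc]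
    _ = star (a ^ (k + i)) * a ^ m := by rw [hstar, pow_add, star_mul]; simp only [mul_assoc]

theorem commute_of_commute (hproper : ∀ z : R, star z * z = 0 → z = 0) (hx : IsMWGI m a x)
    {c : R} (hca : Commute c a) (hcs : Commute c (star a)) : Commute c x := by
  obtain ⟨hx2, k, hk, hstar⟩ := hx
  obtain ⟨d, hd⟩ : ∃ d, IsDrazin a d := ⟨_, isDrazin_pow_mul_pow hx2 hk⟩
  have hce : Commute c (a * d) := hca.mul_right (hd.commute_of_commute hca)
  have hex : a * d * x = x := by
    obtain ⟨i, hi⟩ := hd.exists_mul_mul_pow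
    rw [← pow_mul_pow_succ_of_mul_sq hx2 i, ← mul_assoc, hi]
  set u := c * x - x * c with hu
  have heu : a * d * u = u := by
    rw [hu, mul_sub, ← mul_assoc, ← hce.eq, mul_assoc, hex, ← mul_assoc, hex]
  have hcs' : ∀ n, Commute c (star (a ^ k) * a ^ n) := fun n => by
    rw [star_pow]; exact (hcs.pow_right k).mul_right (hca.pow_right n)
  have hz : star (a ^ k) * (a ^ (m + 1) * u) = 0 :=
    calc star (a ^ k) * (a ^ (m + 1) * u)
        = star (a ^ k) * a ^ (m + 1) * c * x - star (a ^ k) * a ^ (m + 1) * x * c := by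
          rw [hu]; noncomm_ring
      _ = 0 := by rw [← (hcs' _).eq, mul_assoc c, hstar, (hcs' m).eq, sub_self]
  have he : a * d = a ^ k * (a * d ^ (k + 1)) := by
    rw [← mul_assoc, ← pow_succ, pow_succ' a k, mul_assoc, hd.pow_mul_pow_succ]
  have hz_mem : a ^ (m + 1) * u = a ^ k * (a * d ^ (k + 1) * (a ^ (m + 1) * u)) :=
    calc a ^ (m + 1) * u = a * d * (a ^ (m + 1) * u) := by
          rw [← mul_assoc, ← (((Commute.refl a).mul_right hd.2.1).pow_left (m + 1)).eq,
            mul_assoc, heu]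
      _ = a ^ k * (a * d ^ (k + 1) * (a ^ (m + 1) * u)) := by rw [he, mul_assoc]
  have hz0 : a ^ (m + 1) * u = 0 := by
    rw [hz_mem] at hz ⊢
    exact mul_eq_zero_of_star_mul_mul_eq_zero hproper hz
  have hu0 : u = 0 :=
    calc u = d ^ (m + 1) * a ^ (m + 1) * u := by
          rw [pow_succ a m, ← mul_assoc, hd.pow_succ_mul_pow, ← hd.2.1, heu]
      _ = 0 := by rw [mul_assoc, hz0, mul_zero]
  exact sub_eq_zero.1 hu0

theorem mul {b y : R} (hx : IsMWGI m a x) (hy : IsMWGI m b y) (hab : Commute a b)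
    (hsab : Commute (star a) b) (hxb : Commute x b) (hay : Commute a y) (hxy : Commute x y) :
    IsMWGI m (a * b) (x * y) := by
  obtain ⟨K, ⟨hxK, hsx⟩, hyK, hsy⟩ := (hx.eventually_index.and hy.eventually_index).exists
  refine ⟨?_, K, ?_, ?_⟩
  · rw [hxy.mul_pow, (hxb.symm.pow_right 2).mul_mul_mul_comm, hx.1, hy.1]
  · rw [hab.mul_pow, hab.mul_pow, (hay.symm.pow_right (K + 1)).mul_mul_mul_comm, hxK, hyK]
  have hbP : Commute (b ^ m) (star (a ^ K) * a ^ m) := by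
    rw [star_pow]; exact ((hsab.pow_pow K m).mul_left (hab.pow_pow m m)).symm
  have hPQ : Commute (star (a ^ K) * a ^ m) (star (b ^ K) * b ^ m) := by
    have hsasb : Commute a (star b) := by simpa using hsab.star_star
    rw [star_pow, star_pow]
    exact ((hab.star_star.pow_pow K K).mul_right (hsab.pow_pow K m)).mul_left
      ((hsasb.pow_pow m K).mul_right (hab.pow_pow m m))
  have hstar_ab : star ((a * b) ^ K) * (a * b) ^ m
      = star (b ^ K) * b ^ m * (star (a ^ K) * a ^ m) := by
    rw [hab.mul_pow, hab.mul_pow, star_mul, mul_assoc, ← mul_assoc _ (a ^ m), ← hbP.eq]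
    simp only [mul_assoc]
  calc star ((a * b) ^ K) * (a * b) ^ (m + 1) * (x * y)
      = star ((a * b) ^ K) * (a * b) ^ m * (a * b * (x * y)) := by
        rw [pow_succ]; simp only [mul_assoc]
    _ = star (b ^ K) * b ^ m * (star (a ^ K) * a ^ m * (a * x)) * (b * y) := by
        rw [hstar_ab, hxb.symm.mul_mul_mul_comm]; simp only [mul_assoc]
    _ = star (a ^ K) * a ^ m * (star (b ^ K) * b ^ m * (b * y)) := by
        rw [hsx, ← hPQ.eq, mul_assoc]
    _ = star ((a * b) ^ K) * (a * b) ^ m := by rw [hsy, hstar_ab, hPQ.eq]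

end IsMWGI

end StarRing

theorem mwgi_mul_general {R : Type*} [Ring R] [StarRing R]
    (hproper : ∀ x : R, star x * x = 0 → x = 0)
    (m : ℕ) (a b x y : R)
    (hx : IsMWGI m a x) (hy : IsMWGI m b y)
    (hab : a * b = b * a) (hsab : star a * b = b * star a) :
    x * y = y * x ∧ IsMWGI m (a * b) (x * y) := by
  have hab : Commute a b := hab
  have hsab : Commute (star a) b := hsab
  have hsba : Commute (star b) a := by simpa using hsab.symm.star_star
  have hbx : Commute b x := hx.commute_of_commute hproper hab.symm hsab.symm
  have hsbx : Commute (star b) x := hx.commute_of_commute hproper hsba hab.star_star.symm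
  have hay : Commute a y := hy.commute_of_commute hproper hab hsba.symm
  have hxy : Commute x y := hy.commute_of_commute hproper hbx.symm hsbx.symm
  exact ⟨hxy.eq, hx.mul hy hab hsab hbx.symm hay hxy⟩

theorem mwgi_mul {R : Type*} [Ring R] [StarRing R]
    (hproper : ∀ x : R, star x * x = 0 → x = 0)
    (m : ℕ) (hm : 0 < m) (a b x y : R)
    (hx : IsMWGI m a x) (hy : IsMWGI m b y)
    (hab : a * b = b * a) (hsab : star a * b = b * star a) :
    x * y = y * x ∧ IsMWGI m (a * b) (x * y) :=
  mwgi_mul_general hproper m a b x y hx hy hab hsab
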